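/- arXiv:1309.3825 — 2 statements merged into one kernel-verified Lean document; each statement's English description precedes it below -/
import Mathlib

section
/- Let r ≥ 2 be an integer and let G be the graph obtained from the cycle graph on 3r vertices a₀, a₁, …, a_{3r−1} (with aᵢ adjacent to a_{i+1 mod 3r}) by adding two new vertices x and y together with the edges a₀x, xy, and y a₃ (so that a₀ and a₃ are joined by an added path of length 3 internally disjoint from the cycle). Then the maximum number of pairwise vertex-disjoint copies of T₁ in G equals r, and the minimum size of a vertex set of G covering all copies of T₁ in G also equals r. -/
/-- `T₁`, the perfect binary tree on 3 vertices: the path `0 - 1 - 2`. -/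
def T1 : SimpleGraph (Fin 3) :=
  SimpleGraph.fromRel (fun i j => i.val + 1 = j.val)

/-- Base relation for the graph obtained from the cycle `a₀ a₁ … a_{3r-1}` (the `Sum.inl`
vertices) by adding two new vertices `x = Sum.inr 0` and `y = Sum.inr 1` with the edges
`a₀x`, `xy`, `y a₃`. -/
def R9 (r : ℕ) : (Fin (3 * r) ⊕ Fin 2) → (Fin (3 * r) ⊕ Fin 2) → Prop
  | .inl i, .inl j => (i.val + 1) % (3 * r) = j.val
  | .inl i, .inr x => i.val = 0 ∧ x.val = 0
  | .inr x, .inr y => x.val = 0 ∧ y.val = 1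
  | .inr x, .inl j => x.val = 1 ∧ j.val = 3

/-- The cycle on `3r` vertices together with an added path `a₀ - x - y - a₃` of length 3,
internally disjoint from the cycle. -/
def G9 (r : ℕ) : SimpleGraph (Fin (3 * r) ⊕ Fin 2) :=
  SimpleGraph.fromRel (R9 r)

/-- The `i`-th copy of `T₁` in the packing: `a_{3i} - a_{3i+1} - a_{3i+2}`. -/
def packF (r : ℕ) (i : Fin r) : T1 →g G9 r where
  toFun k := Sum.inl ⟨3 * i.val + k.val, by have := i.isLt; have := k.isLt; omega⟩
  map_rel' := by
    intro a b hab
    simp only [T1, SimpleGraph.fromRel_adj] at hab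
    obtain ⟨hne, h⟩ := hab
    have hi := i.isLt; have ha := a.isLt; have hb := b.isLt
    simp only [G9, SimpleGraph.fromRel_adj, R9]
    refine ⟨by simp only [ne_eq, Sum.inl.injEq, Fin.mk.injEq]; omega, ?_⟩
    rcases h with h | h
    · left; rw [Nat.mod_eq_of_lt (by omega)]; omega
    · right; rw [Nat.mod_eq_of_lt (by omega)]; omega

lemma packF_apply (r : ℕ) (i : Fin r) (k : Fin 3) :
    packF r i k = Sum.inl ⟨3 * i.val + k.val, by have := i.isLt; have := k.isLt; omega⟩ := rfl

lemma packF_inj (r : ℕ) (i : Fin r) : Function.Injective ⇑(packF r i) := by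
  intro k l h
  simp only [packF_apply, Sum.inl.injEq, Fin.mk.injEq] at h
  exact Fin.ext (by omega)

lemma packF_disj (r : ℕ) : Pairwise fun i j =>
    Disjoint (Set.range ⇑(packF r i)) (Set.range ⇑(packF r j)) := by
  intro i j hij
  rw [Set.disjoint_left]
  rintro z ⟨k, rfl⟩ ⟨l, hl⟩
  simp only [packF_apply, Sum.inl.injEq, Fin.mk.injEq] at hl
  have := k.isLt; have := l.isLt
  exact hij (Fin.ext (by omega))

lemma adj_succ (r i j : ℕ) (hi : i < 3 * r) (h : (i + 1) % (3 * r) = j) :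
    j = i + 1 ∨ (i + 1 = 3 * r ∧ j = 0) := by
  rcases Nat.lt_or_ge (i + 1) (3 * r) with hlt | hge
  · left; rw [Nat.mod_eq_of_lt hlt] at h; omega
  · right
    have h3 : i + 1 = 3 * r := by omega
    rw [h3, Nat.mod_self] at h; omega

/-- Key structural fact: any path on three distinct vertices of `G9 r` passes through a
cycle vertex whose index is divisible by 3. -/
lemma cover_key (r : ℕ) (u v w : Fin (3 * r) ⊕ Fin 2) (huw : u ≠ w)
    (h1 : (G9 r).Adj u v) (h2 : (G9 r).Adj v w) :
    ∃ a : Fin (3 * r), a.val % 3 = 0 ∧ (u = Sum.inl a ∨ v = Sum.inl a ∨ w = Sum.inl a) := by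
  rcases u with b|x <;> rcases v with a|p <;> rcases w with c|q <;>
    simp only [G9, SimpleGraph.fromRel_adj, R9, ne_eq, Sum.inl.injEq, Sum.inr.injEq,
      reduceCtorEq, not_false_eq_true, true_and, and_true, false_or, or_false] at h1 h2 ⊢
  · obtain ⟨hba, h1⟩ := h1
    obtain ⟨hac, h2⟩ := h2
    have hb := b.isLt; have ha := a.isLt; have hc := c.isLt
    have hbc : (b : ℕ) ≠ (c : ℕ) := fun h => huw (congrArg Sum.inl (Fin.ext h))
    have key : (b : ℕ) % 3 = 0 ∨ (a : ℕ) % 3 = 0 ∨ (c : ℕ) % 3 = 0 := by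
      rcases h1 with h1 | h1 <;> rcases h2 with h2 | h2 <;>
        [ (have e1 := adj_succ r _ _ hb h1; have e2 := adj_succ r _ _ ha h2);
          (have e1 := adj_succ r _ _ hb h1; have e2 := adj_succ r _ _ hc h2);
          (have e1 := adj_succ r _ _ ha h1; have e2 := adj_succ r _ _ ha h2);
          (have e1 := adj_succ r _ _ ha h1; have e2 := adj_succ r _ _ hc h2)] <;>
        rcases e1 with e1 | e1 <;> rcases e2 with e2 | e2 <;> omega
    rcases key with k | k | k
    · exact ⟨b, k, Or.inl rfl⟩
    · exact ⟨a, k, Or.inr (Or.inl rfl)⟩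
    · exact ⟨c, k, Or.inr (Or.inr rfl)⟩
  · exact ⟨a, by rcases h2 with ⟨h, _⟩ | ⟨_, h⟩ <;> omega, Or.inr rfl⟩
  · exact ⟨b, by rcases h1 with ⟨h, _⟩ | ⟨_, h⟩ <;> omega, Or.inl rfl⟩
  · exact ⟨b, by rcases h1 with ⟨h, _⟩ | ⟨_, h⟩ <;> omega, rfl⟩
  · exact ⟨a, by rcases h1 with ⟨_, h⟩ | ⟨h, _⟩ <;> omega, Or.inl rfl⟩
  · exact ⟨a, by rcases h1 with ⟨_, h⟩ | ⟨h, _⟩ <;> omega, rfl⟩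
  · exact ⟨c, by rcases h2 with ⟨_, h⟩ | ⟨h, _⟩ <;> omega, rfl⟩
  · exact absurd (congrArg Sum.inr (Fin.ext (show (x : ℕ) = q by
      rcases h1.2 with ⟨e1, e2⟩ | ⟨e1, e2⟩ <;> rcases h2.2 with ⟨f1, f2⟩ | ⟨f1, f2⟩ <;> omega))) huw

/-- For `r ≥ 2`, in the graph obtained from the cycle on `3r` vertices by adding a path of
length `3` joining `a₀` and `a₃`, the maximum number of pairwise vertex-disjoint copies of
`T₁` equals `r`, and the minimum size of a vertex set covering all copies of `T₁` also
equals `r`. -/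
theorem cycle_plus_path3_packing_covering (r : ℕ) (hr : 2 ≤ r) :
    ((∃ f : Fin r → (T1 →g G9 r),
        (∀ i, Function.Injective ⇑(f i)) ∧
        Pairwise fun i j => Disjoint (Set.range ⇑(f i)) (Set.range ⇑(f j))) ∧
      (∀ (ι : Type) [Fintype ι] (f : ι → (T1 →g G9 r)),
        (∀ i, Function.Injective ⇑(f i)) →
        (Pairwise fun i j => Disjoint (Set.range ⇑(f i)) (Set.range ⇑(f j))) →
        Fintype.card ι ≤ r)) ∧
    ((∃ U : Finset (Fin (3 * r) ⊕ Fin 2),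
        U.card = r ∧
        ∀ f : T1 →g G9 r, Function.Injective ⇑f → ∃ v ∈ U, v ∈ Set.range ⇑f) ∧
      (∀ U : Finset (Fin (3 * r) ⊕ Fin 2),
        (∀ f : T1 →g G9 r, Function.Injective ⇑f → ∃ v ∈ U, v ∈ Set.range ⇑f) →
        r ≤ U.card)) := by
  refine ⟨⟨⟨packF r, packF_inj r, packF_disj r⟩, ?_⟩, ⟨?_, ?_⟩⟩
  · -- packing upper bound by counting
    intro ι _ f hinj hdisj
    have hg : Function.Injective (fun p : ι × Fin 3 => f p.1 p.2) := by
      rintro ⟨i, k⟩ ⟨j, l⟩ h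
      simp only at h
      by_cases hij : i = j
      · subst hij; exact Prod.ext rfl (hinj i h)
      · exact absurd (Set.disjoint_left.mp (hdisj hij) ⟨k, rfl⟩ ⟨l, h.symm⟩) not_false
    have hcard := Fintype.card_le_of_injective _ hg
    simp only [Fintype.card_prod, Fintype.card_sum, Fintype.card_fin] at hcard
    omega
  · -- cover of size r
    refine ⟨(Finset.univ : Finset (Fin r)).image
      (fun i => (Sum.inl ⟨3 * i.val, by have := i.isLt; omega⟩ : Fin (3 * r) ⊕ Fin 2)), ?_, ?_⟩
    · rw [Finset.card_image_of_injective _ ?_, Finset.card_univ, Fintype.card_fin]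
      intro i j h
      simp only [Sum.inl.injEq, Fin.mk.injEq] at h
      exact Fin.ext (by omega)
    · intro f hf
      have h01 : T1.Adj 0 1 := by
        rw [T1, SimpleGraph.fromRel_adj]; exact ⟨by decide, Or.inl rfl⟩
      have h12 : T1.Adj 1 2 := by
        rw [T1, SimpleGraph.fromRel_adj]; exact ⟨by decide, Or.inl rfl⟩
      have huw : f 0 ≠ f 2 := fun h => (by decide : (0 : Fin 3) ≠ 2) (hf h)
      obtain ⟨a, ha0, hcase⟩ := cover_key r (f 0) (f 1) (f 2) huw (f.map_rel h01) (f.map_rel h12)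
      refine ⟨Sum.inl a, ?_, ?_⟩
      · rw [Finset.mem_image]
        refine ⟨⟨a.val / 3, by have := a.isLt; omega⟩, Finset.mem_univ _, ?_⟩
        exact congrArg Sum.inl (Fin.ext (by simp only [Fin.val_mk]; have := a.isLt; omega))
      · rcases hcase with h | h | h
        · exact ⟨0, h⟩
        · exact ⟨1, h⟩
        · exact ⟨2, h⟩
  · -- cover lower bound from the packing
    intro U hU
    have H : ∀ i : Fin r, ∃ v, v ∈ U ∧ v ∈ Set.range ⇑(packF r i) := by
      intro i
      obtain ⟨v, h1, h2⟩ := hU (packF r i) (packF_inj r i)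
      exact ⟨v, h1, h2⟩
    choose g hgU hgr using H
    have hinjOn : Set.InjOn g (Finset.univ : Finset (Fin r)) := by
      intro i _ j _ hij
      by_contra hne
      exact Set.disjoint_left.mp (packF_disj r hne) (hgr i) (hij ▸ hgr j)
    have hle := Finset.card_le_card_of_injOn (s := Finset.univ) g (fun i _ => hgU i) hinjOn
    simpa using hle
end

section
/- Let r ≥ 3 be an integer and let G be the graph obtained from the cycle graph on 3r vertices a₀, a₁, …, a_{3r−1} (with aᵢ adjacent to a_{i+1 mod 3r}) by adding five new vertices x₁, x₂, x₃, x₄, x₅ together with the edges a₀x₁, x₁x₂, x₂x₃, x₃x₄, x₄x₅, and x₅a₆ (so that a₀ and a₆ are joined by an added path of length 6 internally disjoint from the cycle). Then the maximum number of pairwise vertex-disjoint copies of T₁ in G equals r+1, and the minimum size of a vertex set of G covering all copies of T₁ in G also equals r+1. -/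
/-- Base relation for the graph obtained from the cycle `a₀ a₁ … a_{3r-1}` (the `Sum.inl`
vertices) by adding five new vertices `x₁, …, x₅` (`x_{k+1} = Sum.inr k`) with the edges
`a₀x₁`, `x₁x₂`, `x₂x₃`, `x₃x₄`, `x₄x₅`, `x₅a₆`. -/
def R10 (r : ℕ) : (Fin (3 * r) ⊕ Fin 5) → (Fin (3 * r) ⊕ Fin 5) → Prop
  | .inl i, .inl j => (i.val + 1) % (3 * r) = j.val
  | .inl i, .inr x => i.val = 0 ∧ x.val = 0
  | .inr x, .inr y => x.val + 1 = y.val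
  | .inr x, .inl j => x.val = 4 ∧ j.val = 6

/-- The cycle on `3r` vertices together with an added path `a₀ - x₁ - x₂ - x₃ - x₄ - x₅ - a₆`
of length 6, internally disjoint from the cycle. -/
def G10 (r : ℕ) : SimpleGraph (Fin (3 * r) ⊕ Fin 5) :=
  SimpleGraph.fromRel (R10 r)

/-!
Listing the vertices as `a₀, x₁, …, x₅, a₁, …, a_{3r-1}`, the first `r + 1` consecutive
triples are paths, giving `r + 1` disjoint copies of `T₁`; no more fit into `3r + 5` vertices.
Deleting `{a₃ₖ} ∪ {x₃}` leaves a matching, which contains no copy of `T₁`; conversely a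
cover has to meet each of the `r + 1` disjoint copies.
-/

open Function

theorem injective_uncurry_iff {ι α β : Type*} {f : ι → α → β} :
    Injective (uncurry f) ↔
      (∀ i, Injective (f i)) ∧ Pairwise fun i j => Disjoint (Set.range (f i)) (Set.range (f j)) := by
  refine ⟨fun h => ⟨fun i a b hab => (Prod.ext_iff.mp (@h (i, a) (i, b) hab)).2, ?_⟩, ?_⟩
  · rintro i j hij
    refine Set.disjoint_left.mpr ?_
    rintro _ ⟨a, rfl⟩ ⟨b, hb⟩
    exact hij (Prod.ext_iff.mp (@h (j, b) (i, a) hb)).1.symm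
  · rintro ⟨hinj, hdisj⟩ ⟨i, a⟩ ⟨j, b⟩ (hab : f i a = f j b)
    obtain rfl : i = j := by
      by_contra hij
      exact Set.disjoint_left.mp (hdisj hij) ⟨a, rfl⟩ ⟨b, hab.symm⟩
    rw [hinj i hab]

theorem Finset.card_le_card_of_forall_exists_mem {ι β : Type*} [Fintype ι] {s : ι → Set β}
    (hs : Pairwise (Disjoint on s)) {U : Finset β} (hU : ∀ i, ∃ v ∈ U, v ∈ s i) :
    Fintype.card ι ≤ U.card := by
  choose g hgU hgs using hU
  have hg : Injective g := fun i j hij => by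
    by_contra hne
    exact Set.disjoint_left.mp (hs hne) (hgs i) (hij ▸ hgs j)
  rw [← Finset.card_univ]
  exact Finset.card_le_card_of_injOn g (fun i _ => hgU i) hg.injOn

namespace T1

lemma adj_zero_one : T1.Adj 0 1 := by simp [T1]

lemma adj_one_two : T1.Adj 1 2 := by simp [T1]

variable {V : Type*} {G : SimpleGraph V} {u v w : V}

def homOfAdj (huv : G.Adj u v) (hvw : G.Adj v w) : T1 →g G where
  toFun := ![u, v, w]
  map_rel' {a b} hab := by
    simp only [T1, SimpleGraph.fromRel_adj] at hab
    fin_cases a <;> fin_cases b <;> simp_all [huv.symm, hvw.symm]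

theorem exists_mem_range_of_subsingleton_adj (U : Set V)
    (hU : ∀ v w w', G.Adj v w → G.Adj v w' → v ∉ U → w ∉ U → w' ∉ U → w = w')
    (f : T1 →g G) (hf : Injective f) : ∃ v ∈ U, v ∈ Set.range f := by
  by_contra! hcon
  have hout : ∀ a, f a ∉ U := fun a ha => hcon _ ha ⟨a, rfl⟩
  have h02 : f 0 = f 2 :=
    hU _ _ _ (f.map_adj adj_zero_one).symm (f.map_adj adj_one_two) (hout 1) (hout 0) (hout 2)
  exact absurd (hf h02) (by decide)

end T1

lemma Nat.add_one_mod_of_lt {i n : ℕ} (h : i < n) :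
    (i + 1) % n = if i + 1 = n then 0 else i + 1 := by
  split_ifs with h'
  · simp [h']
  · exact Nat.mod_eq_of_lt (by omega)

namespace G10

variable {r : ℕ}

def cyc (hr : 0 < r) (k : ℕ) : Fin (3 * r) ⊕ Fin 5 :=
  .inl ⟨k % (3 * r), Nat.mod_lt _ (by omega)⟩

lemma adj_cyc_succ (hr : 0 < r) (k : ℕ) : (G10 r).Adj (cyc hr k) (cyc hr (k + 1)) := by
  have hlt : k % (3 * r) < 3 * r := Nat.mod_lt _ (by omega)
  have hsucc := Nat.add_one_mod_of_lt hlt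
  rw [Nat.mod_add_mod] at hsucc
  simp only [G10, cyc, SimpleGraph.fromRel_adj, R10, ne_eq, Sum.inl.injEq, Fin.mk.injEq,
    Nat.mod_add_mod, true_or, and_true]
  split_ifs at hsucc <;> omega

def vtx (hr : 0 < r) : ℕ → Fin (3 * r) ⊕ Fin 5
  | 0 => cyc hr 0
  | 1 => .inr 0
  | 2 => .inr 1
  | 3 => .inr 2
  | 4 => .inr 3
  | 5 => .inr 4
  | n + 6 => cyc hr (n + 1)

def vtxIndex : Fin (3 * r) ⊕ Fin 5 → ℕ
  | .inl j => if j.val = 0 then 0 else j.val + 5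
  | .inr m => m.val + 1

lemma vtxIndex_vtx (hr : 0 < r) {n : ℕ} (hn : n < 3 * r + 5) : vtxIndex (vtx hr n) = n := by
  match n with
  | 0 => simp [vtx, vtxIndex, cyc]
  | 1 | 2 | 3 | 4 | 5 => rfl
  | n + 6 => simp [vtx, vtxIndex, cyc, Nat.mod_eq_of_lt (show n + 1 < 3 * r by omega)]

lemma adj_vtx_succ (hr : 0 < r) {n : ℕ} (hn : n % 3 ≠ 2) :
    (G10 r).Adj (vtx hr n) (vtx hr (n + 1)) := by
  match n with
  | 0 => simp [G10, vtx, cyc, R10]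
  | 1 | 3 | 4 => simp [G10, vtx, R10]
  | n + 6 => exact adj_cyc_succ hr (n + 1)

def packing (hr : 0 < r) (i : ℕ) : T1 →g G10 r :=
  T1.homOfAdj (adj_vtx_succ hr (n := 3 * i) (by omega))
    (adj_vtx_succ hr (n := 3 * i + 1) (by omega))

lemma packing_apply (hr : 0 < r) (i : ℕ) (a : Fin 3) : packing hr i a = vtx hr (3 * i + a) := by
  fin_cases a <;> rfl

lemma injective_uncurry_packing (hr : 0 < r) :
    Injective (uncurry fun i : Fin (r + 1) => ⇑(packing hr i)) := by
  rintro ⟨i, a⟩ ⟨j, b⟩ hij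
  have := congrArg vtxIndex hij
  simp only [uncurry_apply_pair, packing_apply] at this
  rw [vtxIndex_vtx hr (by omega), vtxIndex_vtx hr (by omega)] at this
  ext <;> simp only [Fin.val_inj] <;> omega

def mulThree (r : ℕ) : Fin r ↪ Fin (3 * r) :=
  ⟨fun k => ⟨3 * k, by omega⟩, fun k l h => Fin.ext (by simpa using congrArg Fin.val h)⟩

@[simp]
lemma val_mulThree (k : Fin r) : (mulThree r k).val = 3 * k :=
  rfl

/-- `{a₃ₖ} ∪ {x₃}` -/
def cover (r : ℕ) : Finset (Fin (3 * r) ⊕ Fin 5) :=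
  (Finset.univ.map (mulThree r)).disjSum {2}

lemma card_cover (r : ℕ) : (cover r).card = r + 1 := by
  simp [cover, Finset.card_disjSum]

lemma inl_mem_cover {j : Fin (3 * r)} : .inl j ∈ cover r ↔ j.val % 3 = 0 := by
  simp only [cover, Finset.inl_mem_disjSum, Finset.mem_map, Finset.mem_univ, true_and,
    Fin.ext_iff, val_mulThree]
  exact ⟨by rintro ⟨k, hk⟩; omega, fun h => ⟨⟨j / 3, by omega⟩, by simp only; omega⟩⟩

lemma inr_mem_cover {m : Fin 5} : .inr m ∈ cover r ↔ m = 2 := by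
  simp [cover]

def partner : Fin (3 * r) ⊕ Fin 5 → Fin (3 * r) ⊕ Fin 5
  | .inl i => .inl ⟨if i.val % 3 = 1 then i + 1 else i - 1, by split_ifs <;> omega⟩
  | .inr m => .inr (![1, 0, 2, 4, 3] m)

lemma eq_partner_of_adj {v w : Fin (3 * r) ⊕ Fin 5} (hvw : (G10 r).Adj v w)
    (hv : v ∉ cover r) (hw : w ∉ cover r) : w = partner v := by
  rw [G10, SimpleGraph.fromRel_adj] at hvw
  obtain ⟨hne, hR⟩ := hvw
  rcases v with i | m <;> rcases w with j | m' <;>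
    simp only [inl_mem_cover, inr_mem_cover, R10] at hv hw hR
  · have hi := Nat.add_one_mod_of_lt i.isLt
    have hj := Nat.add_one_mod_of_lt j.isLt
    simp only [partner, Sum.inl.injEq, Fin.ext_iff]
    split_ifs at hi hj ⊢ <;> omega
  · omega
  · omega
  · fin_cases m <;> fin_cases m' <;> simp_all [partner]

end G10

open G10 in
/-- For `r ≥ 3`, in the graph obtained from the cycle on `3r` vertices by adding a path of
length `6` joining `a₀` and `a₆`, the maximum number of pairwise vertex-disjoint copies of
`T₁` equals `r + 1`, and the minimum size of a vertex set covering all copies of `T₁` also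
equals `r + 1`. -/
theorem cycle_plus_path6_packing_covering (r : ℕ) (hr : 3 ≤ r) :
    ((∃ f : Fin (r + 1) → (T1 →g G10 r),
        (∀ i, Function.Injective ⇑(f i)) ∧
        Pairwise fun i j => Disjoint (Set.range ⇑(f i)) (Set.range ⇑(f j))) ∧
      (∀ (ι : Type) [Fintype ι] (f : ι → (T1 →g G10 r)),
        (∀ i, Function.Injective ⇑(f i)) →
        (Pairwise fun i j => Disjoint (Set.range ⇑(f i)) (Set.range ⇑(f j))) →
        Fintype.card ι ≤ r + 1)) ∧
    ((∃ U : Finset (Fin (3 * r) ⊕ Fin 5),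
        U.card = r + 1 ∧
        ∀ f : T1 →g G10 r, Function.Injective ⇑f → ∃ v ∈ U, v ∈ Set.range ⇑f) ∧
      (∀ U : Finset (Fin (3 * r) ⊕ Fin 5),
        (∀ f : T1 →g G10 r, Function.Injective ⇑f → ∃ v ∈ U, v ∈ Set.range ⇑f) →
        r + 1 ≤ U.card)) := by
  have hr₀ : 0 < r := by omega
  obtain ⟨hinj, hdisj⟩ := injective_uncurry_iff.mp (injective_uncurry_packing hr₀)
  have hcover (f : T1 →g G10 r) (hf : Function.Injective f) : ∃ v ∈ cover r, v ∈ Set.range f :=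
    T1.exists_mem_range_of_subsingleton_adj (cover r : Set _)
      (fun _ _ _ h h' hv hw hw' =>
        (eq_partner_of_adj h hv hw).trans (eq_partner_of_adj h' hv hw').symm) f hf
  refine ⟨⟨⟨fun i => packing hr₀ i, hinj, hdisj⟩, fun ι _ f hf hd => ?_⟩,
    ⟨cover r, card_cover r, hcover⟩, fun U hU => ?_⟩
  · have := Fintype.card_le_of_injective _ (injective_uncurry_iff.mpr ⟨hf, hd⟩)
    simp only [Fintype.card_prod, Fintype.card_sum, Fintype.card_fin] at this
    omega
  · simpa using Finset.card_le_card_of_forall_exists_mem hdisj fun i => hU _ (hinj i)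
end
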